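/- arXiv:2604.16829 — 7 statements merged into one kernel-verified Lean document; each statement's English description precedes it below -/
import Mathlib

section
/- Let (X,d) be a metric space, F a finite nonempty set of facility locations in X, T a finite multiset of truthful client locations, and x : L → X reported locations for strategic clients L. Define cost_A = Σ_{i∈T} d(i,A) + Σ_{i∈L} d(x_i,A). If B ∈ F minimizes cost over F with reports x, then for any client i ∈ L, replacing x_i by B yields a profile in which B still minimizes the perceived cost: for all C ∈ F, Σ_{j∈T} d(j,B) + Σ_{j∈L\{i}} d(x_j,B) ≤ Σ_{j∈T} d(j,C) + Σ_{j∈L\{i}} d(x_j,C) + d(B,C). -/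
/-- Lemma 1 (lie-on-top): if `B` minimizes perceived cost over `F` with reports `x`,
then after client `i` instead reports `B`, `B` still (weakly) minimizes perceived cost. -/
theorem lie_on_top {X : Type*} [MetricSpace X] {ιT ιL : Type*} [DecidableEq ιL]
    (F : Finset X) (hF : F.Nonempty) (T : Finset ιT) (t : ιT → X)
    (L : Finset ιL) (x : ιL → X) (B : X) (hB : B ∈ F)
    (hmin : ∀ C ∈ F,
      (∑ j ∈ T, dist (t j) B) + ∑ j ∈ L, dist (x j) B ≤
      (∑ j ∈ T, dist (t j) C) + ∑ j ∈ L, dist (x j) C)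
    (i : ιL) (hi : i ∈ L) :
    ∀ C ∈ F,
      (∑ j ∈ T, dist (t j) B) + ∑ j ∈ L.erase i, dist (x j) B ≤
      (∑ j ∈ T, dist (t j) C) + (∑ j ∈ L.erase i, dist (x j) C) + dist B C := by
  intro C hC
  have h := hmin C hC
  rw [← Finset.sum_erase_add L _ hi, ← Finset.sum_erase_add L (fun j => dist (x j) C) hi] at h
  have htri : dist (x i) C ≤ dist (x i) B + dist B C := dist_triangle _ _ _
  linarith
end

section
/- Let (X,d) be a metric space, C a finite set of n clients with true locations, partitioned into truthful clients T (with |T| = n−k) and strategic clients L (with |L| = k, k < n/2). Let O, W ∈ X be two points such that Σ_{i∈T} d(i,W) ≤ Σ_{i∈T} d(i,O) + k·d(W,O). Then Σ_{i∈C} d(i,W) ≤ ((n+2k)/(n−2k)) · Σ_{i∈C} d(i,O). -/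
/-- Price of anarchy bound (Theorem 4 key step): if
`Σ_{i∈T} d(i,W) ≤ Σ_{i∈T} d(i,O) + k·d(W,O)`, then the social cost of `W` is at
most `(n+2k)/(n-2k)` times that of `O`. -/
theorem poa_bound {X : Type*} [MetricSpace X] {ι : Type*} [DecidableEq ι]
    (C T L : Finset ι) (loc : ι → X)
    (hdisj : Disjoint T L) (hunion : T ∪ L = C)
    (n k : ℕ) (hn : C.card = n) (hk : L.card = k) (hT : T.card = n - k)
    (hkn : 2 * k < n)
    (O W : X)
    (hyp : (∑ i ∈ T, dist (loc i) W) ≤ (∑ i ∈ T, dist (loc i) O) + (k : ℝ) * dist W O) :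
    (∑ i ∈ C, dist (loc i) W) ≤
      (((n : ℝ) + 2 * k) / ((n : ℝ) - 2 * k)) * ∑ i ∈ C, dist (loc i) O := by
  set A := ∑ i ∈ C, dist (loc i) W with hAdef
  set B := ∑ i ∈ C, dist (loc i) O with hBdef
  set D := dist W O with hDdef
  have hsplitW : A = (∑ i ∈ T, dist (loc i) W) + ∑ i ∈ L, dist (loc i) W := by
    rw [hAdef, ← hunion, Finset.sum_union hdisj]
  have hsplitO : B = (∑ i ∈ T, dist (loc i) O) + ∑ i ∈ L, dist (loc i) O := by
    rw [hBdef, ← hunion, Finset.sum_union hdisj]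
  have hL : (∑ i ∈ L, dist (loc i) W) ≤ (∑ i ∈ L, dist (loc i) O) + (k : ℝ) * D := by
    have : (∑ i ∈ L, dist (loc i) W) ≤ ∑ i ∈ L, (dist (loc i) O + D) := by
      apply Finset.sum_le_sum
      intro i _
      have := dist_triangle (loc i) O W
      rw [hDdef, dist_comm W O]
      linarith [dist_triangle (loc i) O W]
    rwa [Finset.sum_add_distrib, Finset.sum_const, hk, nsmul_eq_mul] at this
  have hAB : A ≤ B + 2 * (k : ℝ) * D := by
    rw [hsplitW, hsplitO]; linarith
  have hnD : (n : ℝ) * D ≤ A + B := by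
    have h1 : ∑ i ∈ C, D ≤ ∑ i ∈ C, (dist (loc i) W + dist (loc i) O) := by
      apply Finset.sum_le_sum
      intro i _
      rw [hDdef]
      linarith [dist_triangle W (loc i) O, dist_comm W (loc i),
        dist_comm (loc i) W]
    rw [Finset.sum_const, hn, nsmul_eq_mul, Finset.sum_add_distrib] at h1
    exact h1
  have hpos : (0 : ℝ) < (n : ℝ) - 2 * k := by
    have : (2 * k : ℝ) < n := by exact_mod_cast hkn
    linarith
  rw [div_mul_eq_mul_div, le_div_iff₀ hpos]
  have hDnn : 0 ≤ D := dist_nonneg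
  nlinarith [hAB, hnD, hDnn]
end

section
/- Let d be a metric on X, C a finite set of clients, L_X ⊆ C a subset, and O, X* ∈ X points such that d(i,X*) ≤ d(i,O) for every i ∈ L_X. If Σ_{i∈C} d(i,X*) ≤ Σ_{i∈C} d(i,O) + |L_X|·d(X*,O), then Σ_{i∈C} d(i,X*) ≤ 3·Σ_{i∈C} d(i,O). -/
/-- Theorem 11: strong price of anarchy/stability at most 3. If every client of
`L_X` weakly prefers `X*` to `O`, and the total cost of `X*` exceeds that of `O`
by at most `|L_X|·d(X*,O)`, then the cost of `X*` is at most 3 times that of `O`. -/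
theorem spoa_three {Y : Type*} [MetricSpace Y] {ι : Type*}
    (C LX : Finset ι) (hLC : LX ⊆ C) (loc : ι → Y) (O Xs : Y)
    (hpref : ∀ i ∈ LX, dist (loc i) Xs ≤ dist (loc i) O)
    (hyp : (∑ i ∈ C, dist (loc i) Xs) ≤
           (∑ i ∈ C, dist (loc i) O) + (LX.card : ℝ) * dist Xs O) :
    (∑ i ∈ C, dist (loc i) Xs) ≤ 3 * ∑ i ∈ C, dist (loc i) O := by
  have key : (LX.card : ℝ) * dist Xs O ≤ 2 * ∑ i ∈ C, dist (loc i) O := by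
    calc (LX.card : ℝ) * dist Xs O
        = ∑ _i ∈ LX, dist Xs O := by
          rw [Finset.sum_const, nsmul_eq_mul]
      _ ≤ ∑ i ∈ LX, (dist (loc i) Xs + dist (loc i) O) := by
          refine Finset.sum_le_sum fun i _ => ?_
          calc dist Xs O ≤ dist Xs (loc i) + dist (loc i) O := dist_triangle _ _ _
            _ = dist (loc i) Xs + dist (loc i) O := by rw [dist_comm]
      _ ≤ ∑ i ∈ LX, (dist (loc i) O + dist (loc i) O) := by
          refine Finset.sum_le_sum fun i hi => ?_
          have := hpref i hi; linarith
      _ = 2 * ∑ i ∈ LX, dist (loc i) O := by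
          rw [Finset.mul_sum]; exact Finset.sum_congr rfl fun i _ => (two_mul _).symm
      _ ≤ 2 * ∑ i ∈ C, dist (loc i) O := by
          refine mul_le_mul_of_nonneg_left ?_ (by norm_num)
          exact Finset.sum_le_sum_of_subset_of_nonneg hLC
            fun i _ _ => dist_nonneg
  linarith
end

section
/- Let (X,d) be a metric space, T and L finite disjoint sets of clients with |T|+|L| = n, |L| = k ≥ 2. Let O, A ∈ X and δ ≥ 0 satisfy: (1) Σ_{j∈T} d(j,A) ≤ Σ_{j∈T} d(j,O) − (k−2)δ; (2) Σ_{j∈L} d(j,A) ≤ Σ_{j∈L} d(j,O) + (k−1)δ; (3) d(O,A) ≤ δ. If n > k/(k−1), then Σ_{j∈T∪L} d(j,A) ≤ ((n + k/(k−1))/(n − k/(k−1))) · Σ_{j∈T∪L} d(j,O). -/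
/-- Arithmetic heart of the price of stability bound for `k ≥ 2` (Theorem 2). -/
theorem pos_bound {X : Type*} [MetricSpace X] {ι : Type*} [DecidableEq ι]
    (T L : Finset ι) (hdisj : Disjoint T L) (loc : ι → X)
    (n k : ℕ) (hn : T.card + L.card = n) (hk : L.card = k) (hk2 : 2 ≤ k)
    (O A : X) (δ : ℝ) (hδ : 0 ≤ δ)
    (h1 : (∑ j ∈ T, dist (loc j) A) ≤ (∑ j ∈ T, dist (loc j) O) - ((k : ℝ) - 2) * δ)
    (h2 : (∑ j ∈ L, dist (loc j) A) ≤ (∑ j ∈ L, dist (loc j) O) + ((k : ℝ) - 1) * δ)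
    (h3 : dist O A ≤ δ)
    (hnk : (k : ℝ) / ((k : ℝ) - 1) < n) :
    (∑ j ∈ T ∪ L, dist (loc j) A) ≤
      (((n : ℝ) + (k : ℝ) / ((k : ℝ) - 1)) / ((n : ℝ) - (k : ℝ) / ((k : ℝ) - 1))) *
        ∑ j ∈ T ∪ L, dist (loc j) O := by
  have hk1 : (0:ℝ) < (k:ℝ) - 1 := by
    have : (2:ℝ) ≤ (k:ℝ) := by exact_mod_cast hk2
    linarith
  have hk2' : (0:ℝ) ≤ (k:ℝ) - 2 := by
    have : (2:ℝ) ≤ (k:ℝ) := by exact_mod_cast hk2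
    linarith
  set SA := ∑ j ∈ T ∪ L, dist (loc j) A with hSA
  set SO := ∑ j ∈ T ∪ L, dist (loc j) O with hSO
  have hsplitA : SA = (∑ j ∈ T, dist (loc j) A) + ∑ j ∈ L, dist (loc j) A :=
    Finset.sum_union hdisj
  have hsplitO : SO = (∑ j ∈ T, dist (loc j) O) + ∑ j ∈ L, dist (loc j) O :=
    Finset.sum_union hdisj
  -- L-side triangle inequality
  have hL : (∑ j ∈ L, dist (loc j) A) ≤ (∑ j ∈ L, dist (loc j) O) + (k:ℝ) * dist O A := by
    have : (∑ j ∈ L, dist (loc j) A) ≤ ∑ j ∈ L, (dist (loc j) O + dist O A) :=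
      Finset.sum_le_sum fun j _ => dist_triangle _ _ _
    simpa [Finset.sum_add_distrib, hk] using this
  -- key: (k-1)(SA - SO) ≤ k * dist O A
  have key : ((k:ℝ) - 1) * (SA - SO) ≤ (k:ℝ) * dist O A := by
    nlinarith [mul_le_mul_of_nonneg_left h1 (le_of_lt hk1),
      mul_le_mul_of_nonneg_left h2 hk2',
      mul_le_mul_of_nonneg_left hL (le_of_lt hk1)]
  -- n * dist O A ≤ SO + SA
  have hcard : ((T ∪ L).card : ℝ) = (n : ℝ) := by
    rw [Finset.card_union_of_disjoint hdisj]; exact_mod_cast hn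
  have hnd : (n:ℝ) * dist O A ≤ SO + SA := by
    have : (∑ _j ∈ T ∪ L, dist O A) ≤ ∑ j ∈ T ∪ L, (dist (loc j) O + dist (loc j) A) :=
      Finset.sum_le_sum fun j _ => dist_triangle_left _ _ _
    simpa [Finset.sum_add_distrib, Finset.sum_const, nsmul_eq_mul, hcard, hSA, hSO] using this
  have hOA : 0 ≤ dist O A := dist_nonneg
  have hden : (0:ℝ) < (n:ℝ) - (k:ℝ) / ((k:ℝ) - 1) := by linarith
  rw [div_mul_eq_mul_div, le_div_iff₀ hden]
  set c : ℝ := (k:ℝ) / ((k:ℝ) - 1) with hcdef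
  have hc : c * ((k:ℝ) - 1) = (k:ℝ) := by
    rw [hcdef]; field_simp
  have hc0 : 0 ≤ c := by positivity
  have key' : SA - SO ≤ c * dist O A := by
    have h := key
    rw [← hc] at h
    nlinarith [mul_nonneg hc0 hOA]
  nlinarith [mul_le_mul_of_nonneg_left key' (Nat.cast_nonneg (α := ℝ) n),
    mul_le_mul_of_nonneg_left hnd hc0]
end

section
/- Fix n ≥ 3 and 2 < k ≤ n/2, and any ε with 0 < ε < (k−2)/(n−k). On the real line, consider facilities at O = 0 and O* = 1+ε + ((k−2)/(n−k) − ε) + (n−2k+2)/(n−k), with k−1 clients at 0, one client at 1+ε, and n−k clients at 1+ε+(k−2)/(n−k)−ε. Then the total distance of all clients to O equals n−1+ε, the total distance to O* equals n+1−ε, and O is the unique minimizer among {O, O*}; moreover the perceived costs of O and O* are equal when the client at 1+ε instead reports location O*. -/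
/-- Lower bound instance for price of stability (Theorem 3, Figure 2):
the explicit line instance with facilities `O = 0` and `O*`, where
`cost(O) = n-1+ε < cost(O*) = n+1-ε`, and after the client at `1+ε` reports
`O*` the perceived costs of the two facilities are equal. -/
theorem pos_lower_bound_instance (n k : ℕ) (hn : 3 ≤ n) (hk : 2 < k)
    (hkn : 2 * k ≤ n) (ε : ℝ) (hε : 0 < ε)
    (hε' : ε < ((k : ℝ) - 2) / ((n : ℝ) - k)) :
    let A1 : ℝ := 1 + ε
    let Bloc : ℝ := 1 + ε + ((k : ℝ) - 2) / ((n : ℝ) - k) - ε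
    let Ostar : ℝ :=
      1 + ε + (((k : ℝ) - 2) / ((n : ℝ) - k) - ε) + ((n : ℝ) - 2 * k + 2) / ((n : ℝ) - k)
    let cost : ℝ → ℝ := fun x =>
      ((k : ℝ) - 1) * |0 - x| + |A1 - x| + ((n : ℝ) - k) * |Bloc - x|
    let perceived : ℝ → ℝ := fun x =>
      ((k : ℝ) - 1) * |0 - x| + |Ostar - x| + ((n : ℝ) - k) * |Bloc - x|
    cost 0 = (n : ℝ) - 1 + ε ∧
    cost Ostar = (n : ℝ) + 1 - ε ∧
    cost 0 < cost Ostar ∧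
    perceived 0 = perceived Ostar := by
  intro A1 Bloc Ostar cost perceived
  have hk3 : (3:ℝ) ≤ (k:ℝ) := by exact_mod_cast hk
  have hkn' : 2 * (k:ℝ) ≤ (n:ℝ) := by exact_mod_cast hkn
  have hnk : (0:ℝ) < (n:ℝ) - k := by linarith
  have hd : 0 < ((k:ℝ) - 2) / ((n:ℝ) - k) := div_pos (by linarith) hnk
  have hd1 : ((k:ℝ) - 2) / ((n:ℝ) - k) ≤ 1 := by
    rw [div_le_one hnk]; linarith
  have hdnk : ((k:ℝ) - 2) / ((n:ℝ) - k) * ((n:ℝ) - k) = (k:ℝ) - 2 :=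
    div_mul_cancel₀ _ (ne_of_gt hnk)
  have hO : Ostar = 2 := by
    show 1 + ε + (((k : ℝ) - 2) / ((n : ℝ) - k) - ε)
        + ((n : ℝ) - 2 * k + 2) / ((n : ℝ) - k) = 2
    field_simp
    ring
  have hB : Bloc = 1 + ((k:ℝ) - 2) / ((n:ℝ) - k) := by
    show 1 + ε + ((k : ℝ) - 2) / ((n : ℝ) - k) - ε = _
    ring
  have hA : A1 = 1 + ε := rfl
  have c0 : cost 0 = (n : ℝ) - 1 + ε := by
    show ((k : ℝ) - 1) * |0 - 0| + |A1 - 0| + ((n : ℝ) - k) * |Bloc - 0|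
        = (n : ℝ) - 1 + ε
    rw [hA, hB, sub_zero, sub_zero, sub_zero, abs_zero,
      abs_of_nonneg (by linarith : (0:ℝ) ≤ 1 + ε),
      abs_of_nonneg (by linarith : (0:ℝ) ≤ 1 + ((k:ℝ) - 2) / ((n:ℝ) - k))]
    have : ((n:ℝ) - k) * (1 + ((k:ℝ) - 2) / ((n:ℝ) - k))
        = ((n:ℝ) - k) + ((k:ℝ) - 2) := by
      rw [mul_add, mul_one, mul_comm, hdnk]
    rw [this]; ring
  have cO : cost Ostar = (n : ℝ) + 1 - ε := by
    show ((k : ℝ) - 1) * |0 - Ostar| + |A1 - Ostar| + ((n : ℝ) - k) * |Bloc - Ostar|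
        = (n : ℝ) + 1 - ε
    rw [hA, hB, hO,
      abs_of_nonpos (by linarith : (0:ℝ) - 2 ≤ 0),
      abs_of_nonpos (by linarith : 1 + ε - 2 ≤ 0),
      abs_of_nonpos (by linarith : 1 + ((k:ℝ) - 2) / ((n:ℝ) - k) - 2 ≤ 0)]
    have : ((n:ℝ) - k) * -(1 + ((k:ℝ) - 2) / ((n:ℝ) - k) - 2)
        = ((n:ℝ) - k) - ((k:ℝ) - 2) := by
      have h2 : ((n:ℝ) - k) * (((k:ℝ) - 2) / ((n:ℝ) - k)) = (k:ℝ) - 2 := by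
        rw [mul_comm]; exact hdnk
      nlinarith [h2]
    rw [this]; ring
  refine ⟨c0, cO, by rw [c0, cO]; linarith, ?_⟩
  show ((k : ℝ) - 1) * |0 - 0| + |Ostar - 0| + ((n : ℝ) - k) * |Bloc - 0|
      = ((k : ℝ) - 1) * |0 - Ostar| + |Ostar - Ostar| + ((n : ℝ) - k) * |Bloc - Ostar|
  rw [hB, hO, sub_self, sub_zero, sub_zero, abs_zero,
    abs_of_nonneg (by norm_num : (0:ℝ) ≤ 2),
    abs_of_nonpos (by linarith : (0:ℝ) - 2 ≤ 0),
    abs_of_nonneg (by linarith : (0:ℝ) ≤ 1 + ((k:ℝ) - 2) / ((n:ℝ) - k)),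
    abs_of_nonpos (by linarith : 1 + ((k:ℝ) - 2) / ((n:ℝ) - k) - 2 ≤ 0)]
  have h2 : ((n:ℝ) - k) * (((k:ℝ) - 2) / ((n:ℝ) - k)) = (k:ℝ) - 2 := by
    rw [mul_comm]; exact hdnk
  simp only [sub_self, abs_zero]
  nlinarith [h2]
end

section
/- Fix n even and 1 ≤ k < n/2. On the real line with facilities at O = 0 and W = 1, suppose the true client locations are: all k strategic clients and n/2 − 1 truthful clients at 0, and (n−2k)/2 + 1 truthful clients at 1. Then the optimal cost (at O) equals (n−2k)/2 + 1, the cost at W equals (n+2k)/2 − 1, and their ratio equals (n+2k−2)/(n−2k+2). Moreover, if all k strategic clients report location 1, then at least n/2 + 1 of the n reported locations are at 1, so W strictly minimizes the perceived cost among {O, W}, and after any single strategic client changes their report, at least n/2 reported locations remain at 1, so the perceived cost of W is still at most that of O. -/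
/-- Price of anarchy lower bound instance (Theorem 6, Figure 3): facilities at
`0` and `1`, `n/2 - 1 + k` clients truly at `0` and `n/2 - k + 1` at `1`; the
ratio of the cost of `W = 1` to the optimal cost at `O = 0` is
`(n+2k-2)/(n-2k+2)`, and all `k` strategic clients reporting `1` forms a Nash
equilibrium whose winner is `W`. -/
theorem poa_lower_bound_instance (n k : ℕ) (hn : 2 ∣ n) (hk : 1 ≤ k)
    (hkn : 2 * k < n) :
    let trueCost : ℝ → ℝ := fun A =>
      ((n : ℝ) / 2 - 1 + k) * |A - 0| + ((n : ℝ) / 2 - (k : ℝ) + 1) * |A - 1|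
    -- all k liars report 1: reports are n/2 - 1 at 0 and n/2 + 1 at 1
    let perceived : ℝ → ℝ := fun A =>
      ((n : ℝ) / 2 - 1) * |A - 0| + ((n : ℝ) / 2 + 1) * |A - 1|
    -- after one liar deviates to x': n/2 - 1 reports at 0, n/2 at 1, one at x'
    let perceivedDev : ℝ → ℝ → ℝ := fun x' A =>
      ((n : ℝ) / 2 - 1) * |A - 0| + ((n : ℝ) / 2) * |A - 1| + |A - x'|
    trueCost 0 = ((n : ℝ) - 2 * k) / 2 + 1 ∧
    trueCost 1 = ((n : ℝ) + 2 * k) / 2 - 1 ∧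
    trueCost 1 / trueCost 0 = ((n : ℝ) + 2 * k - 2) / ((n : ℝ) - 2 * k + 2) ∧
    perceived 1 < perceived 0 ∧
    (∀ x' : ℝ, perceivedDev x' 1 ≤ perceivedDev x' 0) := by
  intro trueCost perceived perceivedDev
  have hnk : (2:ℝ) * k < n := by exact_mod_cast hkn
  have hk1 : (1:ℝ) ≤ k := by exact_mod_cast hk
  have h0 : trueCost 0 = ((n : ℝ) - 2 * k) / 2 + 1 := by
    simp [trueCost, abs_of_nonpos]; ring
  refine ⟨h0, ?_, ?_, ?_, ?_⟩
  · simp [trueCost]; ring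
  · have h1 : trueCost 1 = ((n : ℝ) + 2 * k) / 2 - 1 := by
      simp [trueCost]; ring
    rw [h0, h1]
    rw [div_eq_div_iff (by linarith) (by linarith : (n:ℝ) - 2*k + 2 ≠ 0)]
    ring
  · simp [perceived, abs_of_nonpos]
    linarith
  · intro x'
    simp only [perceivedDev, sub_zero, sub_self, abs_zero, abs_one, zero_sub, abs_neg]
    rcases abs_cases (1 - x') with ⟨h, _⟩ | ⟨h, _⟩ <;>
      rcases abs_cases x' with ⟨h2, _⟩ | ⟨h2, _⟩ <;> nlinarith
end

section
/- Let d be a metric on X with three facility points A, B, C and three clients i, j, k such that d(A,i)=1, d(i,B)=2, d(A,j)=2, d(j,C)=1, d(B,k)=1, d(k,C)=2, with distances between non-adjacent pairs given by shortest paths in the triangle graph (so d(A,B)=3, d(B,C)=3, d(A,C)=3). Then for each facility there is a pair of clients who both strictly prefer another facility and who, by both reporting at that other facility, make it the unique minimizer of perceived cost among {A,B,C}: if all three clients' reports yield winner A, then j and k reporting at C makes C win; if C wins, i and k reporting at B makes B win; if B wins, i and j reporting at A makes A win. Consequently no strong Nash equilibrium exists. -/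
/-- Theorem 7 (no strong Nash equilibrium in general metrics): in the Condorcet
cycle instance, for each facility there is a pair of clients who both strictly
prefer another facility and who, by both reporting at that other facility, make
it the unique minimizer of perceived cost among the three facilities, no matter
what the third client reports. -/
theorem no_strong_nash_instance {X : Type*} [MetricSpace X]
    (A B C i j k : X)
    (hAi : dist A i = 1) (hiB : dist i B = 2)
    (hAj : dist A j = 2) (hjC : dist j C = 1)
    (hBk : dist B k = 1) (hkC : dist k C = 2)
    (hAB : dist A B = 3) (hBC : dist B C = 3) (hAC : dist A C = 3)
    (hiC : dist i C = 4) (hjB : dist j B = 4) (hkA : dist k A = 4) :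
    -- if A wins, j and k deviate to C and make C the unique winner
    (dist j C < dist j A ∧ dist k C < dist k A ∧
      ∀ x : X, dist x C + dist C C + dist C C < dist x A + dist C A + dist C A ∧
               dist x C + dist C C + dist C C < dist x B + dist C B + dist C B) ∧
    -- if C wins, i and k deviate to B and make B the unique winner
    (dist i B < dist i C ∧ dist k B < dist k C ∧
      ∀ x : X, dist x B + dist B B + dist B B < dist x C + dist B C + dist B C ∧
               dist x B + dist B B + dist B B < dist x A + dist B A + dist B A) ∧
    -- if B wins, i and j deviate to A and make A the unique winner
    (dist i A < dist i B ∧ dist j A < dist j B ∧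
      ∀ x : X, dist x A + dist A A + dist A A < dist x B + dist A B + dist A B ∧
               dist x A + dist A A + dist A A < dist x C + dist A C + dist A C) := by
  have hCA : dist C A = 3 := by rw [dist_comm]; exact hAC
  have hCB : dist C B = 3 := by rw [dist_comm]; exact hBC
  have hBA : dist B A = 3 := by rw [dist_comm]; exact hAB
  have hjA : dist j A = 2 := by rw [dist_comm]; exact hAj
  have hkB : dist k B = 1 := by rw [dist_comm]; exact hBk
  have hiA : dist i A = 1 := by rw [dist_comm]; exact hAi
  refine ⟨⟨?_, ?_, fun x => ⟨?_, ?_⟩⟩, ⟨?_, ?_, fun x => ⟨?_, ?_⟩⟩,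
    ⟨?_, ?_, fun x => ⟨?_, ?_⟩⟩⟩ <;>
    simp only [dist_self, hCA, hCB, hBA, hBC, hAB, hAC, hjA, hjB, hjC, hkA, hkB, hkC, hiA, hiB, hiC] <;>
    try norm_num
  all_goals linarith [dist_triangle x A C, dist_triangle x B C, dist_triangle x C B,
    dist_triangle x A B, dist_triangle x B A, dist_triangle x C A]
end
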